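/- arXiv:2603.27172 — 3 statements merged into one kernel-verified Lean document; each statement's English description precedes it below -/
import Mathlib

section
/- Let E_R, E_D: ℝ → ℝ be twice differentiable with -L ≤ E_i'' ≤ -μ on [0, X] (0 < μ ≤ L), let x_R, x_D ≥ 0 with x_R + x_D ≤ X, and set g = E_R'(x_R) - E_D'(x_D) > 0. Suppose E_R'(x_R + x_D) - E_D'(0) < 0. If δ ∈ (0, x_D] satisfies E_R'(x_R+δ) - E_D'(x_D-δ) ≥ 0 and δ ≥ δ*/2 for the unique zero δ* of t ↦ E_R'(x_R+t) - E_D'(x_D-t), then [E_R(x_R+δ) + E_D(x_D-δ)] - [E_R(x_R) + E_D(x_D)] ≥ 3g²/(16L). -/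
/-!
Write `F t = E_R(x_R + t) + E_D(x_D - t)` for the total output after a transfer `t`; its
derivative is the gap `G t = E_R'(x_R + t) - E_D'(x_D - t)`, and `-2L ≤ G' ≤ 0`.
Hence `G t ≥ g - 2Lt`, which gives `F t - F 0 ≥ g t - L t²` and, at the zero of the gap,
`δ* ≥ g / (2L)`. Since `G δ ≥ 0` and `G` is antitone, `F` increases on `[0, δ]`, so the gain
at `δ` is at least the gain at `d = min δ (g / (2L))`. As `g / (4L) ≤ d ≤ g / (2L)`, the
quadratic bound gives `g d - L d² ≥ 3g² / (16L)`.
-/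

open Set

lemma monotoneOn_Icc_of_hasDerivAt_nonneg {f f' : ℝ → ℝ} {a b : ℝ}
    (hf : ∀ x ∈ Icc a b, HasDerivAt f (f' x) x) (hf' : ∀ x ∈ Icc a b, 0 ≤ f' x) :
    MonotoneOn f (Icc a b) :=
  monotoneOn_of_hasDerivWithinAt_nonneg (convex_Icc a b)
    (fun x hx ↦ (hf x hx).continuousAt.continuousWithinAt)
    (fun x hx ↦ (hf x (interior_subset hx)).hasDerivWithinAt)
    (fun x hx ↦ hf' x (interior_subset hx))

lemma antitoneOn_Icc_of_hasDerivAt_nonpos {f f' : ℝ → ℝ} {a b : ℝ}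
    (hf : ∀ x ∈ Icc a b, HasDerivAt f (f' x) x) (hf' : ∀ x ∈ Icc a b, f' x ≤ 0) :
    AntitoneOn f (Icc a b) :=
  antitoneOn_of_hasDerivWithinAt_nonpos (convex_Icc a b)
    (fun x hx ↦ (hf x hx).continuousAt.continuousWithinAt)
    (fun x hx ↦ (hf x (interior_subset hx)).hasDerivWithinAt)
    (fun x hx ↦ hf' x (interior_subset hx))

lemma sub_mul_le_of_neg_le_hasDerivAt {f f' : ℝ → ℝ} {a b K : ℝ}
    (hf : ∀ x ∈ Icc a b, HasDerivAt f (f' x) x) (hf' : ∀ x ∈ Icc a b, -K ≤ f' x)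
    {x : ℝ} (hx : x ∈ Icc a b) : f a - K * (x - a) ≤ f x := by
  have hmono : MonotoneOn (fun s ↦ f s + K * s) (Icc a b) :=
    monotoneOn_Icc_of_hasDerivAt_nonneg
      (fun s hs ↦ (hf s hs).add ((hasDerivAt_id s).const_mul K))
      (fun s hs ↦ by linarith [hf' s hs])
  linarith [hmono (left_mem_Icc.2 (hx.1.trans hx.2)) hx hx.1]

lemma three_mul_sq_div_le_of_mem_Icc {g L d : ℝ} (hL : 0 < L)
    (hd : d ∈ Icc (g / (4 * L)) (g / (2 * L))) :
    3 * g ^ 2 / (16 * L) ≤ g * d - L * d ^ 2 := by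
  obtain ⟨hlo, hhi⟩ := hd
  rw [div_le_iff₀ (by positivity)] at hlo
  rw [le_div_iff₀ (by positivity)] at hhi
  rw [div_le_iff₀ (by positivity)]
  -- `16 L (g d - L d²) - 3 g² = (4 L d - g) (3 g - 4 L d)`
  nlinarith [mul_nonneg (sub_nonneg.2 hlo) (by linarith : 0 ≤ 3 * g - d * (4 * L))]

section Transfer

variable {F G G' : ℝ → ℝ} {a L : ℝ}

lemma mul_sub_mul_sq_le_sub
    (hF : ∀ t ∈ Icc 0 a, HasDerivAt F (G t) t) (hG : ∀ t ∈ Icc 0 a, HasDerivAt G (G' t) t)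
    (hG'lo : ∀ t ∈ Icc 0 a, -(2 * L) ≤ G' t) {t : ℝ} (ht : t ∈ Icc 0 a) :
    G 0 * t - L * t ^ 2 ≤ F t - F 0 := by
  have hmono : MonotoneOn (fun s ↦ F s - G 0 * s + L * s ^ 2) (Icc 0 a) := by
    refine monotoneOn_Icc_of_hasDerivAt_nonneg (f' := fun s ↦ G s - G 0 + 2 * L * s)
      (fun s hs ↦ ?_) (fun s hs ↦ ?_)
    · exact (((hF s hs).sub ((hasDerivAt_id s).const_mul (G 0))).add
        ((hasDerivAt_pow 2 s).const_mul L)).congr_deriv (by norm_num; ring)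
    · linarith [sub_mul_le_of_neg_le_hasDerivAt hG hG'lo hs]
  linarith [hmono (left_mem_Icc.2 (ht.1.trans ht.2)) ht ht.1]

theorem three_mul_sq_div_le_sub_of_root_le_two_mul
    (hF : ∀ t ∈ Icc 0 a, HasDerivAt F (G t) t) (hG : ∀ t ∈ Icc 0 a, HasDerivAt G (G' t) t)
    (hG'lo : ∀ t ∈ Icc 0 a, -(2 * L) ≤ G' t) (hG'hi : ∀ t ∈ Icc 0 a, G' t ≤ 0) (hL : 0 < L)
    {δ δstar : ℝ} (hδ : δ ∈ Icc 0 a) (hGδ : 0 ≤ G δ) (hδstar : δstar ∈ Icc 0 a)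
    (hGδstar : G δstar = 0) (hhalf : δstar ≤ 2 * δ) :
    3 * G 0 ^ 2 / (16 * L) ≤ F δ - F 0 := by
  have hroot : G 0 ≤ 2 * L * δstar := by
    linarith [sub_mul_le_of_neg_le_hasDerivAt hG hG'lo hδstar]
  have hδa : Icc 0 δ ⊆ Icc 0 a := Icc_subset_Icc_right hδ.2
  have hGnonneg : ∀ t ∈ Icc 0 δ, 0 ≤ G t := fun t ht ↦
    hGδ.trans (antitoneOn_Icc_of_hasDerivAt_nonpos hG hG'hi (hδa ht) hδ ht.2)
  have hFmono : MonotoneOn F (Icc 0 δ) :=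
    monotoneOn_Icc_of_hasDerivAt_nonneg (fun t ht ↦ hF t (hδa ht)) hGnonneg
  have hG0 : 0 ≤ G 0 := hGnonneg 0 (left_mem_Icc.2 hδ.1)
  set d := min δ (G 0 / (2 * L))
  have hd : d ∈ Icc (G 0 / (4 * L)) (G 0 / (2 * L)) := by
    refine ⟨le_min ?_ ?_, min_le_right _ _⟩
    · rw [div_le_iff₀ (by positivity)]
      linarith [mul_le_mul_of_nonneg_left hhalf (by positivity : 0 ≤ 2 * L)]
    · exact div_le_div_of_nonneg_left hG0 (by positivity) (by linarith)
  have hd0 : 0 ≤ d := (by positivity : 0 ≤ G 0 / (4 * L)).trans hd.1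
  calc 3 * G 0 ^ 2 / (16 * L) ≤ G 0 * d - L * d ^ 2 := three_mul_sq_div_le_of_mem_Icc hL hd
    _ ≤ F d - F 0 := mul_sub_mul_sq_le_sub hF hG hG'lo ⟨hd0, (min_le_left _ _).trans hδ.2⟩
    _ ≤ F δ - F 0 := by
      gcongr
      exact hFmono ⟨hd0, min_le_left _ _⟩ ⟨hδ.1, le_rfl⟩ (min_le_left _ _)

end Transfer

theorem stmt3_general (X L μ xR xD g δ δstar : ℝ)
    (ER ED ER' ED' ER'' ED'' : ℝ → ℝ)
    (hμ : 0 < μ) (hμL : μ ≤ L)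
    (hER : ∀ t ∈ Set.Icc (0:ℝ) X, HasDerivAt ER (ER' t) t)
    (hED : ∀ t ∈ Set.Icc (0:ℝ) X, HasDerivAt ED (ED' t) t)
    (hER' : ∀ t ∈ Set.Icc (0:ℝ) X, HasDerivAt ER' (ER'' t) t)
    (hED' : ∀ t ∈ Set.Icc (0:ℝ) X, HasDerivAt ED' (ED'' t) t)
    (hERbd : ∀ t ∈ Set.Icc (0:ℝ) X, -L ≤ ER'' t ∧ ER'' t ≤ -μ)
    (hEDbd : ∀ t ∈ Set.Icc (0:ℝ) X, -L ≤ ED'' t ∧ ED'' t ≤ -μ)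
    (hxR : 0 ≤ xR) (hsum : xR + xD ≤ X)
    (hgdef : g = ER' xR - ED' xD)
    (hδpos : 0 < δ) (hδle : δ ≤ xD)
    (hδleg : ER' (xR + δ) - ED' (xD - δ) ≥ 0)
    (hδstar : δstar ∈ Set.Ioo (0:ℝ) xD)
    (hδstar0 : ER' (xR + δstar) - ED' (xD - δstar) = 0)
    (hhalf : δ ≥ δstar / 2) :
    (ER (xR + δ) + ED (xD - δ)) - (ER xR + ED xD) ≥ 3 * g ^ 2 / (16 * L) := by
  have hR : ∀ t ∈ Icc 0 xD, xR + t ∈ Icc 0 X := fun t ht ↦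
    ⟨by linarith [ht.1], by linarith [ht.2]⟩
  have hD : ∀ t ∈ Icc 0 xD, xD - t ∈ Icc 0 X := fun t ht ↦
    ⟨by linarith [ht.2], by linarith [ht.1]⟩
  have hgain := three_mul_sq_div_le_sub_of_root_le_two_mul
    (F := fun t ↦ ER (xR + t) + ED (xD - t)) (G := fun t ↦ ER' (xR + t) - ED' (xD - t))
    (G' := fun t ↦ ER'' (xR + t) + ED'' (xD - t)) (L := L)
    (fun t ht ↦ (((hER _ (hR t ht)).comp_const_add xR t).add
      ((hED _ (hD t ht)).comp_const_sub xD t)).congr_deriv (sub_eq_add_neg _ _).symm)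
    (fun t ht ↦ (((hER' _ (hR t ht)).comp_const_add xR t).sub
      ((hED' _ (hD t ht)).comp_const_sub xD t)).congr_deriv (sub_neg_eq_add _ _))
    (fun t ht ↦ by linarith [(hERbd _ (hR t ht)).1, (hEDbd _ (hD t ht)).1])
    (fun t ht ↦ by linarith [(hERbd _ (hR t ht)).2, (hEDbd _ (hD t ht)).2])
    (hμ.trans_le hμL) ⟨hδpos.le, hδle⟩ hδleg ⟨hδstar.1.le, hδstar.2.le⟩ hδstar0 (by linarith)
  simpa only [add_zero, sub_zero, ← hgdef] using hgain

/-- Improvement lower bound for a legitimate transfer δ found by the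
halving procedure (δ ≥ δ*/2 where δ* is the unique zero of the gap function):
the gain in total output is at least 3g²/(16L). -/
theorem stmt3 (X L μ xR xD g δ δstar : ℝ)
    (ER ED ER' ED' ER'' ED'' : ℝ → ℝ)
    (hμ : 0 < μ) (hμL : μ ≤ L)
    (hER : ∀ t ∈ Set.Icc (0:ℝ) X, HasDerivAt ER (ER' t) t)
    (hED : ∀ t ∈ Set.Icc (0:ℝ) X, HasDerivAt ED (ED' t) t)
    (hER' : ∀ t ∈ Set.Icc (0:ℝ) X, HasDerivAt ER' (ER'' t) t)
    (hED' : ∀ t ∈ Set.Icc (0:ℝ) X, HasDerivAt ED' (ED'' t) t)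
    (hERbd : ∀ t ∈ Set.Icc (0:ℝ) X, -L ≤ ER'' t ∧ ER'' t ≤ -μ)
    (hEDbd : ∀ t ∈ Set.Icc (0:ℝ) X, -L ≤ ED'' t ∧ ED'' t ≤ -μ)
    (hxR : 0 ≤ xR) (hxD : 0 ≤ xD) (hsum : xR + xD ≤ X)
    (hgdef : g = ER' xR - ED' xD) (hg : 0 < g)
    (hleg : ER' (xR + xD) - ED' 0 < 0)
    (hδpos : 0 < δ) (hδle : δ ≤ xD)
    (hδleg : ER' (xR + δ) - ED' (xD - δ) ≥ 0)
    (hδstar : δstar ∈ Set.Ioo (0:ℝ) xD)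
    (hδstar0 : ER' (xR + δstar) - ED' (xD - δstar) = 0)
    (hδstarUniq : ∀ t ∈ Set.Ioo (0:ℝ) xD, ER' (xR + t) - ED' (xD - t) = 0 → t = δstar)
    (hhalf : δ ≥ δstar / 2) :
    (ER (xR + δ) + ED (xD - δ)) - (ER xR + ED xD) ≥ 3 * g ^ 2 / (16 * L) :=
  stmt3_general X L μ xR xD g δ δstar ER ED ER' ED' ER'' ED'' hμ hμL hER hED hER' hED' hERbd hEDbd
    hxR hsum hgdef hδpos hδle hδleg hδstar hδstar0 hhalf
end

section
/- Let E_1, …, E_N: ℝ → ℝ be concave differentiable functions, let x, x* ∈ ℝ^N be nonnegative vectors with Σᵢ xᵢ = Σᵢ xᵢ* = X, and suppose there is λ* ∈ ℝ with |E_i'(xᵢ) - λ*| ≤ g for all i. Then Σᵢ E_i(xᵢ*) - Σᵢ E_i(xᵢ) ≤ g · ‖x - x*‖₁ ≤ g √N ‖x - x*‖₂. -/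
open Finset in
lemma tangent_le (f : ℝ → ℝ) (f' a b : ℝ) (hconc : ConcaveOn ℝ Set.univ f)
    (hd : HasDerivAt f f' a) : f b ≤ f a + f' * (b - a) := by
  rcases lt_trichotomy a b with h | h | h
  · have := hconc.slope_le_of_hasDerivAt (Set.mem_univ a) (Set.mem_univ b) h hd
    rw [slope_def_field, div_le_iff₀ (by linarith)] at this
    linarith
  · simp [h]
  · have := hconc.le_slope_of_hasDerivAt (Set.mem_univ b) (Set.mem_univ a) h hd
    rw [slope_def_field, le_div_iff₀ (by linarith)] at this
    linarith

open Finset in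
/-- For concave differentiable E_i, feasible allocations x, x* and
λ* with |E_i'(xᵢ) - λ*| ≤ g, the objective gap is bounded by g‖x - x*‖₁,
which in turn is at most g√N‖x - x*‖₂. -/
theorem stmt4 (N : ℕ) (X g lam : ℝ) (E E' : Fin N → ℝ → ℝ) (x xs : Fin N → ℝ)
    (hconc : ∀ i, ConcaveOn ℝ Set.univ (E i))
    (hderiv : ∀ i t, HasDerivAt (E i) (E' i t) t)
    (hx : ∀ i, 0 ≤ x i) (hxs : ∀ i, 0 ≤ xs i)
    (hsumx : ∑ i, x i = X) (hsumxs : ∑ i, xs i = X)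
    (hgap : ∀ i, |E' i (x i) - lam| ≤ g) :
    (∑ i, E i (xs i)) - (∑ i, E i (x i)) ≤ g * (∑ i, |x i - xs i|) ∧
      g * (∑ i, |x i - xs i|) ≤
        g * Real.sqrt N * Real.sqrt (∑ i, (x i - xs i) ^ 2) := by
  rcases Nat.eq_zero_or_pos N with hN | hN
  · subst hN; simp
  have hg : 0 ≤ g := le_trans (abs_nonneg _) (hgap ⟨0, hN⟩)
  constructor
  · have h1 : ∀ i, E i (xs i) - E i (x i) ≤ E' i (x i) * (xs i - x i) := fun i => by
      have := tangent_le (E i) (E' i (x i)) (x i) (xs i) (hconc i) (hderiv i (x i))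
      linarith
    calc (∑ i, E i (xs i)) - (∑ i, E i (x i))
        = ∑ i, (E i (xs i) - E i (x i)) := by rw [Finset.sum_sub_distrib]
      _ ≤ ∑ i, E' i (x i) * (xs i - x i) := Finset.sum_le_sum fun i _ => h1 i
      _ = ∑ i, (E' i (x i) - lam) * (xs i - x i) := by
          simp only [sub_mul, Finset.sum_sub_distrib, ← Finset.mul_sum,
            Finset.sum_sub_distrib, hsumx, hsumxs]
          ring
      _ ≤ ∑ i, g * |x i - xs i| := Finset.sum_le_sum fun i _ => by
          calc (E' i (x i) - lam) * (xs i - x i) ≤ |(E' i (x i) - lam) * (xs i - x i)| :=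
                le_abs_self _
            _ = |E' i (x i) - lam| * |x i - xs i| := by rw [abs_mul, abs_sub_comm (xs i) (x i)]
            _ ≤ g * |x i - xs i| :=
                mul_le_mul_of_nonneg_right (hgap i) (abs_nonneg _)
      _ = g * ∑ i, |x i - xs i| := by rw [Finset.mul_sum]
  · have h2 : (∑ i, |x i - xs i|) ≤ Real.sqrt N * Real.sqrt (∑ i, (x i - xs i) ^ 2) := by
      rw [← Real.sqrt_mul (Nat.cast_nonneg N)]
      rw [Real.le_sqrt (by positivity) (by positivity)]
      calc (∑ i, |x i - xs i|) ^ 2 ≤ (Finset.univ.card : ℝ) * ∑ i, |x i - xs i| ^ 2 := by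
            have h := sq_sum_le_card_mul_sum_sq (s := (Finset.univ : Finset (Fin N)))
              (f := fun i => |x i - xs i|)
            exact_mod_cast h
        _ = N * ∑ i, (x i - xs i) ^ 2 := by simp [sq_abs]
    calc g * (∑ i, |x i - xs i|) ≤ g * (Real.sqrt N * Real.sqrt (∑ i, (x i - xs i) ^ 2)) :=
          mul_le_mul_of_nonneg_left h2 hg
      _ = g * Real.sqrt N * Real.sqrt (∑ i, (x i - xs i) ^ 2) := by ring
end

section
/- Let E_i: [0,X] → ℝ, i=1,…,N, be twice differentiable with -L ≤ E_i''(t) ≤ -μ (0 < μ ≤ L). Let x be a feasible allocation (xᵢ ≥ 0, Σ xᵢ = X) and x* the optimal allocation with E_i'(xᵢ*) = λ* for all i, and suppose |E_i'(xᵢ) - λ*| ≤ g for all i, where g is the donor-receiver gap. Then the objective gap h = Σᵢ E_i(xᵢ*) - Σᵢ E_i(xᵢ) satisfies h ≤ 2N g²/μ, equivalently g ≥ √(μ h / (2N)). -/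
/-- Mean value theorem on a segment inside `[0, X]`, with the sign fact
`(c - a) * (b - a) ≥ 0`. -/
lemma mvt_seg (X : ℝ) (f f' : ℝ → ℝ)
    (hd : ∀ t ∈ Set.Icc (0:ℝ) X, HasDerivAt f (f' t) t)
    (a b : ℝ) (ha : a ∈ Set.Icc (0:ℝ) X) (hb : b ∈ Set.Icc (0:ℝ) X) :
    ∃ c ∈ Set.Icc (0:ℝ) X, f b - f a = f' c * (b - a) ∧ 0 ≤ (c - a) * (b - a) := by
  rcases lt_trichotomy a b with hab | hab | hab
  · have hsub : Set.Icc a b ⊆ Set.Icc (0:ℝ) X :=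
      Set.Icc_subset_Icc ha.1 hb.2
    have hcont : ContinuousOn f (Set.Icc a b) := fun t ht =>
      (hd t (hsub ht)).continuousAt.continuousWithinAt
    obtain ⟨c, hc, hc'⟩ := exists_hasDerivAt_eq_slope f f' hab hcont
      (fun t ht => hd t (hsub (Set.Ioo_subset_Icc_self ht)))
    refine ⟨c, hsub (Set.Ioo_subset_Icc_self hc), ?_, ?_⟩
    · have hne : b - a ≠ 0 := by linarith
      rw [eq_div_iff hne] at hc'; linarith
    · nlinarith [hc.1, hc.2]
  · exact ⟨a, ha, by rw [← hab]; simp, by rw [← hab]; simp⟩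
  · have hsub : Set.Icc b a ⊆ Set.Icc (0:ℝ) X :=
      Set.Icc_subset_Icc hb.1 ha.2
    have hcont : ContinuousOn f (Set.Icc b a) := fun t ht =>
      (hd t (hsub ht)).continuousAt.continuousWithinAt
    obtain ⟨c, hc, hc'⟩ := exists_hasDerivAt_eq_slope f f' hab hcont
      (fun t ht => hd t (hsub (Set.Ioo_subset_Icc_self ht)))
    refine ⟨c, hsub (Set.Ioo_subset_Icc_self hc), ?_, ?_⟩
    · have hne : a - b ≠ 0 := by linarith
      rw [eq_div_iff hne] at hc'; linarith
    · nlinarith [hc.1, hc.2]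

/-- Gradient estimate: with -L ≤ E_i'' ≤ -μ on [0,X], feasible x,
optimal x* with common marginal price λ*, and |E_i'(xᵢ) - λ*| ≤ g for all i,
the objective gap h = F(x*) - F(x) satisfies h ≤ 2Ng²/μ, i.e. g ≥ √(μh/(2N)). -/
theorem stmt7 (N : ℕ) (X L μ g lam : ℝ) (E E' E'' : Fin N → ℝ → ℝ)
    (x xs : Fin N → ℝ)
    (hN : 1 ≤ N) (hμ : 0 < μ) (hμL : μ ≤ L)
    (hderiv : ∀ i, ∀ t ∈ Set.Icc (0:ℝ) X, HasDerivAt (E i) (E' i t) t)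
    (hderiv' : ∀ i, ∀ t ∈ Set.Icc (0:ℝ) X, HasDerivAt (E' i) (E'' i t) t)
    (hbd : ∀ i, ∀ t ∈ Set.Icc (0:ℝ) X, -L ≤ E'' i t ∧ E'' i t ≤ -μ)
    (hx : ∀ i, x i ∈ Set.Icc (0:ℝ) X) (hxs : ∀ i, xs i ∈ Set.Icc (0:ℝ) X)
    (hsumx : ∑ i, x i = X) (hsumxs : ∑ i, xs i = X)
    (hopt : ∀ i, E' i (xs i) = lam)
    (hgap : ∀ i, |E' i (x i) - lam| ≤ g) :
    (∑ i, E i (xs i)) - (∑ i, E i (x i)) ≤ 2 * N * g ^ 2 / μ ∧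
      g ≥ Real.sqrt (μ * ((∑ i, E i (xs i)) - (∑ i, E i (x i))) / (2 * N)) := by
  have hg0 : 0 ≤ g := le_trans (abs_nonneg _) (hgap ⟨0, hN⟩)
  -- distance bound |xs i - x i| ≤ g / μ
  have hdist : ∀ i, |xs i - x i| ≤ g / μ := by
    intro i
    obtain ⟨d, hd, hde, -⟩ := mvt_seg X (E' i) (E'' i) (hderiv' i) (xs i) (x i) (hxs i) (hx i)
    have hEd : E'' i d ≤ -μ := (hbd i d hd).2
    have h1 : |E' i (x i) - lam| = |E'' i d| * |x i - xs i| := by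
      rw [← abs_mul, ← hde, hopt i]
    have h2 : μ * |x i - xs i| ≤ |E'' i d| * |x i - xs i| := by
      apply mul_le_mul_of_nonneg_right _ (abs_nonneg _)
      exact le_trans (by linarith : μ ≤ -(E'' i d)) (neg_le_abs _)
    have h3 : μ * |x i - xs i| ≤ g := by
      calc μ * |x i - xs i| ≤ |E'' i d| * |x i - xs i| := h2
        _ = |E' i (x i) - lam| := h1.symm
        _ ≤ g := hgap i
    rw [abs_sub_comm, le_div_iff₀ hμ]
    linarith
  -- per-index gradient inequality
  have hkey : ∀ i, E i (xs i) - E i (x i) ≤ (E' i (x i) - lam) * (xs i - x i) + lam * (xs i - x i) := by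
    intro i
    obtain ⟨c, hc, hce, hcs⟩ := mvt_seg X (E i) (E' i) (hderiv i) (x i) (xs i) (hx i) (hxs i)
    obtain ⟨d, hd, hde, -⟩ := mvt_seg X (E' i) (E'' i) (hderiv' i) (x i) c (hx i) hc
    have hEd : E'' i d ≤ -μ := (hbd i d hd).2
    have h4 : (E' i c - E' i (x i)) * (xs i - x i) ≤ 0 := by
      calc (E' i c - E' i (x i)) * (xs i - x i)
          = E'' i d * ((c - x i) * (xs i - x i)) := by rw [hde]; ring
        _ ≤ 0 := mul_nonpos_of_nonpos_of_nonneg (by linarith) hcs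
    nlinarith [h4]
  have hbound : ∀ i, E i (xs i) - E i (x i) ≤ g * (g / μ) + lam * (xs i - x i) := by
    intro i
    have h1 : (E' i (x i) - lam) * (xs i - x i) ≤ g * (g / μ) := by
      calc (E' i (x i) - lam) * (xs i - x i) ≤ |E' i (x i) - lam| * |xs i - x i| := by
            rw [← abs_mul]; exact le_abs_self _
        _ ≤ g * (g / μ) := mul_le_mul (hgap i) (hdist i) (abs_nonneg _) hg0
    linarith [hkey i]
  have hsum : (∑ i, E i (xs i)) - (∑ i, E i (x i)) ≤ N * (g * (g / μ)) := by
    have : ∑ i, (E i (xs i) - E i (x i)) ≤ ∑ i, (g * (g / μ) + lam * (xs i - x i)) :=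
      Finset.sum_le_sum fun i _ => hbound i
    rw [Finset.sum_sub_distrib] at this
    have hz : ∑ i, (g * (g / μ) + lam * (xs i - x i)) = N * (g * (g / μ)) := by
      rw [Finset.sum_add_distrib, Finset.sum_const, ← Finset.mul_sum, Finset.sum_sub_distrib,
        hsumxs, hsumx, sub_self, mul_zero, add_zero, Finset.card_univ, Fintype.card_fin,
        nsmul_eq_mul]
    linarith [this, hz ▸ this]
  have hN1 : (1:ℝ) ≤ (N:ℝ) := by exact_mod_cast hN
  have hmain : (∑ i, E i (xs i)) - (∑ i, E i (x i)) ≤ 2 * N * g ^ 2 / μ := by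
    have e1 : (N:ℝ) * (g * (g / μ)) = N * g ^ 2 / μ := by ring
    have e2 : (N:ℝ) * g ^ 2 / μ ≤ 2 * N * g ^ 2 / μ := by
      rw [div_le_div_iff₀ hμ hμ]
      have : (0:ℝ) ≤ (N:ℝ) * g ^ 2 * μ := by positivity
      linarith
    linarith [hsum, e1 ▸ hsum]
  refine ⟨hmain, ?_⟩
  have harg : μ * ((∑ i, E i (xs i)) - (∑ i, E i (x i))) / (2 * N) ≤ g ^ 2 := by
    rw [div_le_iff₀ (by positivity)]
    have e : μ * (2 * N * g ^ 2 / μ) = 2 * N * g ^ 2 := by field_simp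
    nlinarith [mul_le_mul_of_nonneg_left hmain hμ.le, e]
  calc Real.sqrt (μ * ((∑ i, E i (xs i)) - (∑ i, E i (x i))) / (2 * N))
      ≤ Real.sqrt (g ^ 2) := Real.sqrt_le_sqrt harg
    _ = g := by rw [Real.sqrt_sq hg0]
end
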